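/- If P[(X,Y) ∈ A] > 0 and (X_i,Y_i) are i.i.d. copies of (X,Y), then P[∑_{i=1}^n 1_{Â}(X_i,Y_i) > 0] → 1 as n → ∞, where Â is the empirical quantile-induced rectangle. -/

import Mathlib

open MeasureTheory ProbabilityTheory Filter Set Topology

/-- The `k`-th order statistic (0-based, i.e. the `(k+1)`-th smallest value) of the first `n`
values of the sequence `x`; by convention `0` when `k ≥ n`. -/
noncomputable def orderStat (n : ℕ) (x : ℕ → ℝ) (k : ℕ) : ℝ :=
  if h : k < n then (fun i : Fin n => x i) (Tuple.sort (fun i : Fin n => x i) ⟨k, h⟩) else 0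

open Finset in
lemma card_filter_comp_perm {n : ℕ} (σ : Equiv.Perm (Fin n)) (p : Fin n → Prop)
    [DecidablePred p] :
    (univ.filter fun i => p (σ i)).card = (univ.filter p).card := by
  apply Finset.card_bij (fun i _ => σ i)
  · intro a ha; simp only [Finset.mem_filter, Finset.mem_univ, true_and] at ha ⊢; exact ha
  · intro a _ b _ h; exact σ.injective h
  · intro b hb; refine ⟨σ.symm b, ?_, by simp⟩
    simp only [Finset.mem_filter, Finset.mem_univ, true_and, Equiv.apply_symm_apply] at hb ⊢; exact hb

open Finset in
lemma card_filter_range_eq_fin {n : ℕ} (p : ℕ → Prop) [DecidablePred p] :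
    ((range n).filter p).card = (univ.filter fun i : Fin n => p i.1).card := by
  classical
  rw [Finset.card_filter, Finset.card_filter]
  exact (Fin.sum_univ_eq_sum_range (fun i => if p i then (1:ℕ) else 0) n).symm

open Finset in
lemma monotone_apply_le_iff {n : ℕ} {g : Fin n → ℝ} (hg : Monotone g) (k : Fin n) (c : ℝ) :
    g k ≤ c ↔ (k : ℕ) < (univ.filter fun i => g i ≤ c).card := by
  classical
  constructor
  · intro h
    have hsub : Finset.Iic k ⊆ univ.filter fun i => g i ≤ c := by
      intro i hi
      simp only [Finset.mem_Iic] at hi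
      simp only [Finset.mem_filter, Finset.mem_univ, true_and]
      exact le_trans (hg hi) h
    have := Finset.card_le_card hsub
    rw [Fin.card_Iic] at this
    omega
  · intro h
    by_contra hc
    push_neg at hc
    have hsub : (univ.filter fun i => g i ≤ c) ⊆ Finset.Iio k := by
      intro i hi
      simp only [Finset.mem_filter, Finset.mem_univ, true_and] at hi
      simp only [Finset.mem_Iio]
      by_contra hik
      push_neg at hik
      exact absurd (le_trans (hg hik) hi) (not_le.2 hc)
    have := Finset.card_le_card hsub
    rw [Fin.card_Iio] at this
    omega

open Finset in
lemma le_monotone_apply_iff {n : ℕ} {g : Fin n → ℝ} (hg : Monotone g) (k : Fin n) (c : ℝ) :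
    c ≤ g k ↔ (univ.filter fun i => g i < c).card ≤ (k : ℕ) := by
  classical
  constructor
  · intro h
    have hsub : (univ.filter fun i => g i < c) ⊆ Finset.Iio k := by
      intro i hi
      simp only [Finset.mem_filter, Finset.mem_univ, true_and] at hi
      simp only [Finset.mem_Iio]
      by_contra hik
      push_neg at hik
      exact absurd (le_trans h (hg hik)) (not_le.2 hi)
    have := Finset.card_le_card hsub
    rw [Fin.card_Iio] at this
    omega
  · intro h
    by_contra hc
    push_neg at hc
    have hsub : Finset.Iic k ⊆ univ.filter fun i => g i < c := by
      intro i hi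
      simp only [Finset.mem_Iic] at hi
      simp only [Finset.mem_filter, Finset.mem_univ, true_and]
      exact lt_of_le_of_lt (hg hi) hc
    have := Finset.card_le_card hsub
    rw [Fin.card_Iic] at this
    omega

open Finset in
lemma orderStat_le_iff {n k : ℕ} (hk : k < n) (x : ℕ → ℝ) (c : ℝ) :
    orderStat n x k ≤ c ↔ k < ((range n).filter fun i => x i ≤ c).card := by
  classical
  rw [orderStat, dif_pos hk, card_filter_range_eq_fin]
  have h1 := monotone_apply_le_iff (Tuple.monotone_sort (fun i : Fin n => x i)) ⟨k, hk⟩ c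
  simp only [Function.comp] at h1
  rw [h1, card_filter_comp_perm (Tuple.sort (fun i : Fin n => x i)) (fun i => x i ≤ c)]

open Finset in
lemma le_orderStat_iff {n k : ℕ} (hk : k < n) (x : ℕ → ℝ) (c : ℝ) :
    c ≤ orderStat n x k ↔ ((range n).filter fun i => x i < c).card ≤ k := by
  classical
  rw [orderStat, dif_pos hk, card_filter_range_eq_fin]
  have h1 := le_monotone_apply_iff (Tuple.monotone_sort (fun i : Fin n => x i)) ⟨k, hk⟩ c
  simp only [Function.comp] at h1
  rw [h1, card_filter_comp_perm (Tuple.sort (fun i : Fin n => x i)) (fun i => x i < c)]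

open scoped Classical in
lemma lln_pair {Ω : Type*} [MeasurableSpace Ω] (μ : Measure Ω) [IsProbabilityMeasure μ]
    (Xs Ys : ℕ → Ω → ℝ) (hXs : ∀ i, Measurable (Xs i)) (hYs : ∀ i, Measurable (Ys i))
    (hindep : iIndepFun (fun i ω => (Xs i ω, Ys i ω)) μ)
    (hid : ∀ i, Measure.map (fun ω => (Xs i ω, Ys i ω)) μ
              = Measure.map (fun ω => (Xs 0 ω, Ys 0 ω)) μ)
    (S : Set (ℝ × ℝ)) (hS : MeasurableSet S) :
    ∀ᵐ ω ∂μ, Tendsto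
      (fun n : ℕ => (((Finset.range n).filter fun i => (Xs i ω, Ys i ω) ∈ S).card : ℝ) / (n : ℝ))
      atTop (𝓝 ((Measure.map (fun ω => (Xs 0 ω, Ys 0 ω)) μ) S).toReal) := by
  classical
  set pair : ℕ → Ω → ℝ × ℝ := fun i ω => (Xs i ω, Ys i ω) with hpair
  have hpm : ∀ i, Measurable (pair i) := fun i => (hXs i).prodMk (hYs i)
  set φ : ℝ × ℝ → ℝ := S.indicator (fun _ => (1:ℝ)) with hφ
  have hφm : Measurable φ := measurable_const.indicator hS
  set Z : ℕ → Ω → ℝ := fun i => φ ∘ pair i with hZ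
  have hZint : Integrable (Z 0) μ := by
    have : Z 0 = (pair 0 ⁻¹' S).indicator (fun _ => (1:ℝ)) := by
      funext ω
      simp only [hZ, hφ, Function.comp_apply]
      exact (Set.indicator_comp_right (pair 0) (g := fun _ => (1:ℝ))).symm
    rw [this]
    exact (integrable_const (1:ℝ)).indicator ((hpm 0) hS)
  have hZindep : Pairwise (Function.onFun (IndepFun · · μ) Z) := fun i j hij =>
    (hindep.indepFun hij).comp hφm hφm
  have hZid : ∀ i, IdentDistrib (Z i) (Z 0) μ μ := fun i =>
    IdentDistrib.comp ⟨(hpm i).aemeasurable, (hpm 0).aemeasurable, hid i⟩ hφm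
  have hmean : μ[Z 0] = ((Measure.map (pair 0) μ) S).toReal := by
    have h1 : Z 0 = (pair 0 ⁻¹' S).indicator (fun _ => (1:ℝ)) := by
      funext ω
      simp only [hZ, hφ, Function.comp_apply]
      exact (Set.indicator_comp_right (pair 0) (g := fun _ => (1:ℝ))).symm
    rw [h1]
    rw [Measure.map_apply (hpm 0) hS]
    exact integral_indicator_one ((hpm 0) hS)
  filter_upwards [strong_law_ae_real Z hZint hZindep hZid] with ω hω
  rw [hmean] at hω
  have hsum : ∀ n : ℕ, ∑ i ∈ Finset.range n, Z i ω
      = (((Finset.range n).filter fun i => (Xs i ω, Ys i ω) ∈ S).card : ℝ) := by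
    intro n
    rw [← Finset.sum_boole]
    apply Finset.sum_congr rfl
    intro i _
    simp [hZ, hφ, Set.indicator_apply, hpair]
  have : (fun n : ℕ => (((Finset.range n).filter fun i =>
      (Xs i ω, Ys i ω) ∈ S).card : ℝ) / (n : ℝ))
      = fun n : ℕ => (∑ i ∈ Finset.range n, Z i ω) / (n : ℝ) := by
    funext n; rw [hsum]
  rw [this]
  exact hω

lemma tendsto_measure_of_ae_eventually {Ω : Type*} [MeasurableSpace Ω] (μ : Measure Ω)
    [IsProbabilityMeasure μ] (F s : ℕ → Set Ω) (hF : ∀ n, MeasurableSet (F n))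
    (hsub : ∀ n, F n ⊆ s n) (hae : ∀ᵐ ω ∂μ, ∀ᶠ n in atTop, ω ∈ F n) :
    Tendsto (fun n => μ (s n)) atTop (𝓝 1) := by
  set G : ℕ → Set Ω := fun N => ⋂ (m) (_ : N ≤ m), F m with hG
  have hGmono : Monotone G := by
    intro a b hab ω hω
    simp only [hG, Set.mem_iInter] at hω ⊢
    intro m hm; exact hω m (le_trans hab hm)
  have hGuniv : μ (⋃ N, G N) = 1 := by
    have h1 : (Set.univ : Set Ω) ≤ᵐ[μ] ⋃ N, G N := by
      filter_upwards [hae] with ω hω _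
      rw [eventually_atTop] at hω
      obtain ⟨N, hN⟩ := hω
      exact Set.mem_iUnion.2 ⟨N, Set.mem_iInter.2 fun m => Set.mem_iInter.2 fun hm => hN m hm⟩
    have := measure_mono_ae h1
    rw [measure_univ] at this
    exact le_antisymm prob_le_one this
  have hlim : Tendsto (fun N => μ (G N)) atTop (𝓝 1) := by
    rw [← hGuniv]
    exact tendsto_measure_iUnion_atTop hGmono
  refine tendsto_of_tendsto_of_tendsto_of_le_of_le hlim tendsto_const_nhds ?_ ?_
  · intro n
    refine measure_mono (le_trans ?_ (hsub n))
    intro ω hω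
    simp only [hG, Set.mem_iInter] at hω
    exact hω n le_rfl
  · intro n; exact prob_le_one

lemma marginal_bounds {Ω : Type*} [MeasurableSpace Ω] (μ : Measure Ω) [IsProbabilityMeasure μ]
    (X : Ω → ℝ) (hX : Measurable X) (QX : ℝ → ℝ) (p q ε : ℝ) (hε : 0 < ε)
    (hp : p ∈ Set.Ioo (0:ℝ) 1) (hq : q ∈ Set.Ioo (0:ℝ) 1)
    (hpε : p + ε ∈ Set.Ioo (0:ℝ) 1) (hqε : q - ε ∈ Set.Ioo (0:ℝ) 1)
    (hQX : ∀ r ∈ Set.Ioo (0:ℝ) 1, (μ {ω | X ω ≤ QX r}).toReal = r) :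
    (μ {ω | QX p ≤ X ω ∧ X ω < QX (p + ε)}).toReal ≤ ε ∧
    (μ {ω | QX (q - ε) < X ω ∧ X ω ≤ QX q}).toReal ≤ ε := by
  have hmle : ∀ s t : Set Ω, s ⊆ t → (μ s).toReal ≤ (μ t).toReal := fun s t h =>
    ENNReal.toReal_mono (measure_ne_top μ t) (measure_mono h)
  have hms : ∀ c : ℝ, MeasurableSet {ω | X ω ≤ c} := fun c => hX measurableSet_Iic
  have hms' : ∀ c : ℝ, MeasurableSet {ω | X ω < c} := fun c => hX measurableSet_Iio
  constructor
  · -- lower part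
    have hpc : QX p < QX (p + ε) := by
      by_contra h
      push_neg at h
      have hsub : {ω | X ω ≤ QX (p + ε)} ⊆ {ω | X ω ≤ QX p} := fun ω hω => le_trans hω h
      have := hmle _ _ hsub
      rw [hQX _ hpε, hQX _ hp] at this
      linarith
    have hlow : p ≤ (μ {ω | X ω < QX p}).toReal := by
      by_contra h
      push_neg at h
      set r := (μ {ω | X ω < QX p}).toReal with hr
      have hr0 : 0 ≤ r := ENNReal.toReal_nonneg
      set η := (p - r) / 2 with hη
      have hη0 : 0 < η := by simp only [hη]; linarith
      have hηmem : p - η ∈ Set.Ioo (0:ℝ) 1 := ⟨by simp only [hη]; linarith, by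
        have := hp.2; simp only [hη]; linarith⟩
      have hQQ : QX (p - η) < QX p := by
        by_contra h2
        push_neg at h2
        have hsub : {ω | X ω ≤ QX p} ⊆ {ω | X ω ≤ QX (p - η)} := fun ω hω => le_trans hω h2
        have := hmle _ _ hsub
        rw [hQX _ hp, hQX _ hηmem] at this
        linarith
      have hsub : {ω | X ω ≤ QX (p - η)} ⊆ {ω | X ω < QX p} :=
        fun ω hω => lt_of_le_of_lt hω hQQ
      have := hmle _ _ hsub
      rw [hQX _ hηmem] at this
      simp only [hη] at this
      linarith
    have hup : (μ {ω | X ω < QX (p + ε)}).toReal ≤ p + ε := by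
      have := hmle {ω | X ω < QX (p + ε)} {ω | X ω ≤ QX (p + ε)} (fun ω hω => Set.mem_setOf_eq ▸ le_of_lt (hω : X ω < QX (p+ε)))
      rw [hQX _ hpε] at this
      exact this
    have hsubB : {ω | QX p ≤ X ω ∧ X ω < QX (p + ε)}
        ⊆ {ω | X ω < QX (p + ε)} \ {ω | X ω < QX p} :=
      fun ω hω => ⟨hω.2, not_lt.2 hω.1⟩
    have hsub' : {ω | X ω < QX p} ⊆ {ω | X ω < QX (p + ε)} :=
      fun ω hω => lt_trans hω hpc
    have hdiff : μ ({ω | X ω < QX (p + ε)} \ {ω | X ω < QX p})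
        = μ {ω | X ω < QX (p + ε)} - μ {ω | X ω < QX p} :=
      measure_diff hsub' ((hms' _).nullMeasurableSet) (measure_ne_top μ _)
    calc (μ {ω | QX p ≤ X ω ∧ X ω < QX (p + ε)}).toReal
        ≤ (μ ({ω | X ω < QX (p + ε)} \ {ω | X ω < QX p})).toReal := hmle _ _ hsubB
      _ = (μ {ω | X ω < QX (p + ε)}).toReal - (μ {ω | X ω < QX p}).toReal := by
          rw [hdiff, ENNReal.toReal_sub_of_le (measure_mono hsub') (measure_ne_top μ _)]
      _ ≤ (p + ε) - p := by
          have := hlow; have := hup; linarith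
      _ = ε := by ring
  · -- upper part
    have hqc : QX (q - ε) ≤ QX q := by
      by_contra h
      push_neg at h
      have hsub : {ω | X ω ≤ QX q} ⊆ {ω | X ω ≤ QX (q - ε)} := fun ω hω => le_trans hω h.le
      have := hmle _ _ hsub
      rw [hQX _ hq, hQX _ hqε] at this
      linarith
    have hsubB : {ω | QX (q - ε) < X ω ∧ X ω ≤ QX q}
        ⊆ {ω | X ω ≤ QX q} \ {ω | X ω ≤ QX (q - ε)} :=
      fun ω hω => ⟨hω.2, not_le.2 hω.1⟩
    have hsub' : {ω | X ω ≤ QX (q - ε)} ⊆ {ω | X ω ≤ QX q} :=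
      fun ω hω => le_trans hω hqc
    have hdiff : μ ({ω | X ω ≤ QX q} \ {ω | X ω ≤ QX (q - ε)})
        = μ {ω | X ω ≤ QX q} - μ {ω | X ω ≤ QX (q - ε)} :=
      measure_diff hsub' ((hms _).nullMeasurableSet) (measure_ne_top μ _)
    calc (μ {ω | QX (q - ε) < X ω ∧ X ω ≤ QX q}).toReal
        ≤ (μ ({ω | X ω ≤ QX q} \ {ω | X ω ≤ QX (q - ε)})).toReal := hmle _ _ hsubB
      _ = (μ {ω | X ω ≤ QX q}).toReal - (μ {ω | X ω ≤ QX (q - ε)}).toReal := by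
          rw [hdiff, ENNReal.toReal_sub_of_le (measure_mono hsub') (measure_ne_top μ _)]
      _ = q - (q - ε) := by rw [hQX _ hq, hQX _ hqε]
      _ = ε := by ring

open scoped Classical in
lemma measurable_cnt {Ω : Type*} [MeasurableSpace Ω] (n : ℕ) (P : ℕ → Ω → Prop)
    (hP : ∀ i, MeasurableSet {ω | P i ω}) :
    Measurable fun ω => ((Finset.range n).filter fun i => P i ω).card := by
  have h : (fun ω => ((Finset.range n).filter fun i => P i ω).card)
      = fun ω => ∑ i ∈ Finset.range n, if P i ω then 1 else 0 :=
    funext fun ω => Finset.card_filter _ _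
  rw [h]
  exact Finset.measurable_sum _ fun i _ => Measurable.ite (hP i) measurable_const measurable_const

/- STATEMENT 4: If `P[(X,Y) ∈ A] > 0` and `(X_i,Y_i)` are i.i.d. copies of `(X,Y)`, then
`P[∑_{i=1}^n 1_Â(X_i,Y_i) > 0] → 1` as `n → ∞`, where
`Â = [X_{([np1]+1)}, X_{([nq1])}] × [Y_{([np2]+1)}, Y_{([nq2])}]` is the empirical
quantile-induced rectangle built from order statistics. -/
open scoped Classical in
set_option maxHeartbeats 2000000 in
/-- If `P[(X,Y) ∈ A] > 0` and `(X_i,Y_i)` are i.i.d. copies of `(X,Y)`, then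
`P[∑_{i=1}^n 1_Â(X_i,Y_i) > 0] → 1` as `n → ∞`, where
`Â = [X_{([np1]+1)}, X_{([nq1])}] × [Y_{([np2]+1)}, Y_{([nq2])}]` is the empirical
quantile-induced rectangle built from order statistics. -/
theorem empirical_rectangle_eventually_nonempty
    {Ω : Type*} [MeasurableSpace Ω] (μ : Measure Ω) [IsProbabilityMeasure μ]
    (X Y : Ω → ℝ) (hX : Measurable X) (hY : Measurable Y)
    (Xs Ys : ℕ → Ω → ℝ) (hXs : ∀ i, Measurable (Xs i)) (hYs : ∀ i, Measurable (Ys i))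
    (hindep : iIndepFun (fun i ω => (Xs i ω, Ys i ω)) μ)
    (hident : ∀ i, Measure.map (fun ω => (Xs i ω, Ys i ω)) μ
                 = Measure.map (fun ω => (X ω, Y ω)) μ)
    (QX QY : ℝ → ℝ)
    (p1 q1 p2 q2 : ℝ) (hp1 : 0 < p1) (hpq1 : p1 < q1) (hq1 : q1 < 1)
    (hp2 : 0 < p2) (hpq2 : p2 < q2) (hq2 : q2 < 1)
    (hQX : ∀ p ∈ Set.Ioo (0:ℝ) 1, (μ {ω | X ω ≤ QX p}).toReal = p)
    (hQY : ∀ p ∈ Set.Ioo (0:ℝ) 1, (μ {ω | Y ω ≤ QY p}).toReal = p)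
    (hpos : 0 < μ {ω | X ω ∈ Set.Icc (QX p1) (QX q1) ∧ Y ω ∈ Set.Icc (QY p2) (QY q2)}) :
    Tendsto
      (fun n => μ {ω | 0 <
        ((Finset.range n).filter (fun i =>
          Xs i ω ∈ Set.Icc (orderStat n (fun j => Xs j ω) ⌊(n:ℝ) * p1⌋₊)
                           (orderStat n (fun j => Xs j ω) (⌊(n:ℝ) * q1⌋₊ - 1)) ∧
          Ys i ω ∈ Set.Icc (orderStat n (fun j => Ys j ω) ⌊(n:ℝ) * p2⌋₊)
                           (orderStat n (fun j => Ys j ω) (⌊(n:ℝ) * q2⌋₊ - 1)))).card})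
      atTop (nhds 1) := by
  -- setup
  set A : Set Ω := {ω | X ω ∈ Set.Icc (QX p1) (QX q1) ∧ Y ω ∈ Set.Icc (QY p2) (QY q2)} with hA
  have ha0 : 0 < (μ A).toReal := ENNReal.toReal_pos hpos.ne' (measure_ne_top μ _)
  set a : ℝ := (μ A).toReal with haa
  set ε : ℝ := min (min ((q1 - p1) / 2) ((q2 - p2) / 2)) (a / 8) with hεdef
  have hε : 0 < ε := lt_min (lt_min (by linarith) (by linarith)) (by linarith)
  have hε1 : ε ≤ (q1 - p1) / 2 := le_trans (min_le_left _ _) (min_le_left _ _)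
  have hε2 : ε ≤ (q2 - p2) / 2 := le_trans (min_le_left _ _) (min_le_right _ _)
  have hε3 : ε ≤ a / 8 := min_le_right _ _
  have hp1m : p1 ∈ Set.Ioo (0:ℝ) 1 := ⟨hp1, by linarith⟩
  have hq1m : q1 ∈ Set.Ioo (0:ℝ) 1 := ⟨by linarith, hq1⟩
  have hp2m : p2 ∈ Set.Ioo (0:ℝ) 1 := ⟨hp2, by linarith⟩
  have hq2m : q2 ∈ Set.Ioo (0:ℝ) 1 := ⟨by linarith, hq2⟩
  have hp1εm : p1 + ε ∈ Set.Ioo (0:ℝ) 1 := ⟨by linarith, by linarith⟩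
  have hq1εm : q1 - ε ∈ Set.Ioo (0:ℝ) 1 := ⟨by linarith, by linarith⟩
  have hp2εm : p2 + ε ∈ Set.Ioo (0:ℝ) 1 := ⟨by linarith, by linarith⟩
  have hq2εm : q2 - ε ∈ Set.Ioo (0:ℝ) 1 := ⟨by linarith, by linarith⟩
  set c1 : ℝ := QX (p1 + ε) with hc1
  set c2 : ℝ := QX (q1 - ε) with hc2
  set d1 : ℝ := QY (p2 + ε) with hd1
  set d2 : ℝ := QY (q2 - ε) with hd2
  -- the shrunk rectangle has positive mass
  set Aε : Set Ω := {ω | X ω ∈ Set.Icc c1 c2 ∧ Y ω ∈ Set.Icc d1 d2} with hAε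
  obtain ⟨hBX1, hBX2⟩ := marginal_bounds μ X hX QX p1 q1 ε hε hp1m hq1m hp1εm hq1εm hQX
  obtain ⟨hBY1, hBY2⟩ := marginal_bounds μ Y hY QY p2 q2 ε hε hp2m hq2m hp2εm hq2εm hQY
  have hUadd : ∀ s t : Set Ω, (μ (s ∪ t)).toReal ≤ (μ s).toReal + (μ t).toReal := by
    intro s t
    rw [← ENNReal.toReal_add (measure_ne_top μ s) (measure_ne_top μ t)]
    exact ENNReal.toReal_mono
      (by simp [ENNReal.add_ne_top, measure_ne_top]) (measure_union_le s t)
  have hmle : ∀ s t : Set Ω, s ⊆ t → (μ s).toReal ≤ (μ t).toReal := fun s t h =>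
    ENNReal.toReal_mono (measure_ne_top μ t) (measure_mono h)
  set B1 : Set Ω := {ω | QX p1 ≤ X ω ∧ X ω < c1} with hB1
  set B2 : Set Ω := {ω | c2 < X ω ∧ X ω ≤ QX q1} with hB2
  set B3 : Set Ω := {ω | QY p2 ≤ Y ω ∧ Y ω < d1} with hB3
  set B4 : Set Ω := {ω | d2 < Y ω ∧ Y ω ≤ QY q2} with hB4
  have hAsub : A ⊆ Aε ∪ B1 ∪ B2 ∪ B3 ∪ B4 := by
    intro ω hω
    obtain ⟨⟨hx1, hx2⟩, hy1, hy2⟩ := hω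
    by_cases h1 : X ω < c1
    · exact Or.inl (Or.inl (Or.inl (Or.inr ⟨hx1, h1⟩)))
    by_cases h2 : c2 < X ω
    · exact Or.inl (Or.inl (Or.inr ⟨h2, hx2⟩))
    by_cases h3 : Y ω < d1
    · exact Or.inl (Or.inr ⟨hy1, h3⟩)
    by_cases h4 : d2 < Y ω
    · exact Or.inr ⟨h4, hy2⟩
    exact Or.inl (Or.inl (Or.inl (Or.inl
      ⟨⟨not_lt.1 h1, not_lt.1 h2⟩, ⟨not_lt.1 h3, not_lt.1 h4⟩⟩)))
  have hδpos : 0 < (μ Aε).toReal := by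
    have hchain : a ≤ (μ Aε).toReal + 4 * ε := by
      calc a ≤ (μ (Aε ∪ B1 ∪ B2 ∪ B3 ∪ B4)).toReal := hmle _ _ hAsub
        _ ≤ (μ (Aε ∪ B1 ∪ B2 ∪ B3)).toReal + (μ B4).toReal := hUadd _ _
        _ ≤ (μ (Aε ∪ B1 ∪ B2)).toReal + (μ B3).toReal + (μ B4).toReal := by
            have := hUadd (Aε ∪ B1 ∪ B2) B3; linarith
        _ ≤ (μ (Aε ∪ B1)).toReal + (μ B2).toReal + (μ B3).toReal + (μ B4).toReal := by
            have := hUadd (Aε ∪ B1) B2; linarith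
        _ ≤ (μ Aε).toReal + (μ B1).toReal + (μ B2).toReal + (μ B3).toReal + (μ B4).toReal := by
            have := hUadd Aε B1; linarith
        _ ≤ (μ Aε).toReal + 4 * ε := by
            have := hBX1; have := hBX2; have := hBY1; have := hBY2; linarith
    linarith
  set δ : ℝ := (μ Aε).toReal with hδdef
  -- the five sets in ℝ² and the corresponding LLN statements
  set pairXY : Ω → ℝ × ℝ := fun ω => (X ω, Y ω) with hpairXY
  have hpairm : Measurable pairXY := hX.prodMk hY
  obtain ⟨S1, hS1def⟩ : ∃ S : Set (ℝ × ℝ), S = {p | p.1 ≤ c1} := ⟨_, rfl⟩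
  obtain ⟨S2, hS2def⟩ : ∃ S : Set (ℝ × ℝ), S = {p | p.1 ≤ c2} := ⟨_, rfl⟩
  obtain ⟨S3, hS3def⟩ : ∃ S : Set (ℝ × ℝ), S = {p | p.2 ≤ d1} := ⟨_, rfl⟩
  obtain ⟨S4, hS4def⟩ : ∃ S : Set (ℝ × ℝ), S = {p | p.2 ≤ d2} := ⟨_, rfl⟩
  obtain ⟨S5, hS5def⟩ : ∃ S : Set (ℝ × ℝ),
      S = {p | p.1 ∈ Set.Icc c1 c2 ∧ p.2 ∈ Set.Icc d1 d2} := ⟨_, rfl⟩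
  have hS1mem : ∀ z : ℝ × ℝ, z ∈ S1 ↔ z.1 ≤ c1 := fun z => by rw [hS1def]; exact Iff.rfl
  have hS2mem : ∀ z : ℝ × ℝ, z ∈ S2 ↔ z.1 ≤ c2 := fun z => by rw [hS2def]; exact Iff.rfl
  have hS3mem : ∀ z : ℝ × ℝ, z ∈ S3 ↔ z.2 ≤ d1 := fun z => by rw [hS3def]; exact Iff.rfl
  have hS4mem : ∀ z : ℝ × ℝ, z ∈ S4 ↔ z.2 ≤ d2 := fun z => by rw [hS4def]; exact Iff.rfl
  have hS5mem : ∀ z : ℝ × ℝ, z ∈ S5 ↔ z.1 ∈ Set.Icc c1 c2 ∧ z.2 ∈ Set.Icc d1 d2 :=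
    fun z => by rw [hS5def]; exact Iff.rfl
  have hS1 : MeasurableSet S1 := by
    rw [hS1def]; exact measurableSet_le measurable_fst measurable_const
  have hS2 : MeasurableSet S2 := by
    rw [hS2def]; exact measurableSet_le measurable_fst measurable_const
  have hS3 : MeasurableSet S3 := by
    rw [hS3def]; exact measurableSet_le measurable_snd measurable_const
  have hS4 : MeasurableSet S4 := by
    rw [hS4def]; exact measurableSet_le measurable_snd measurable_const
  have hS5 : MeasurableSet S5 := by
    rw [hS5def]
    exact ((measurable_fst measurableSet_Icc).inter (measurable_snd measurableSet_Icc) :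
      MeasurableSet ((Prod.fst ⁻¹' Set.Icc c1 c2) ∩ (Prod.snd ⁻¹' Set.Icc d1 d2)))
  have hid' : ∀ i, Measure.map (fun ω => (Xs i ω, Ys i ω)) μ
      = Measure.map (fun ω => (Xs 0 ω, Ys 0 ω)) μ := fun i => (hident i).trans (hident 0).symm
  have hlln : ∀ S : Set (ℝ × ℝ), MeasurableSet S →
      ∀ᵐ ω ∂μ, Tendsto
        (fun n : ℕ => (((Finset.range n).filter fun i => (Xs i ω, Ys i ω) ∈ S).card : ℝ) / (n : ℝ))
        atTop (𝓝 ((μ (pairXY ⁻¹' S)).toReal)) := by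
    intro S hS
    have h := lln_pair μ Xs Ys hXs hYs hindep hid' S hS
    have heq : ((Measure.map (fun ω => (Xs 0 ω, Ys 0 ω)) μ) S).toReal
        = (μ (pairXY ⁻¹' S)).toReal := by
      rw [hident 0, Measure.map_apply hpairm hS]
    rwa [heq] at h
  have hpre1 : (μ (pairXY ⁻¹' S1)).toReal = p1 + ε := by rw [hS1def]; exact hQX _ hp1εm
  have hpre2 : (μ (pairXY ⁻¹' S2)).toReal = q1 - ε := by rw [hS2def]; exact hQX _ hq1εm
  have hpre3 : (μ (pairXY ⁻¹' S3)).toReal = p2 + ε := by rw [hS3def]; exact hQY _ hp2εm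
  have hpre4 : (μ (pairXY ⁻¹' S4)).toReal = q2 - ε := by rw [hS4def]; exact hQY _ hq2εm
  have hpre5 : (μ (pairXY ⁻¹' S5)).toReal = δ := by rw [hS5def]; rfl
  -- counting function
  set C : Set (ℝ × ℝ) → ℕ → Ω → ℕ :=
    fun S n ω => ((Finset.range n).filter fun i => (Xs i ω, Ys i ω) ∈ S).card with hCdef
  have hCm : ∀ S : Set (ℝ × ℝ), MeasurableSet S → ∀ n, Measurable (C S n) := by
    intro S hS n
    exact measurable_cnt n (fun i ω => (Xs i ω, Ys i ω) ∈ S)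
      (fun i => ((hXs i).prodMk (hYs i)) hS)
  -- the good events
  set F : ℕ → Set Ω := fun n => {ω |
    ⌊(n:ℝ) * p1⌋₊ < C S1 n ω ∧ C S2 n ω ≤ ⌊(n:ℝ) * q1⌋₊ - 1 ∧
    ⌊(n:ℝ) * p2⌋₊ < C S3 n ω ∧ C S4 n ω ≤ ⌊(n:ℝ) * q2⌋₊ - 1 ∧
    0 < C S5 n ω ∧ 1 ≤ n} with hF
  have hFmeas : ∀ n, MeasurableSet (F n) := by
    intro n
    have m1 : MeasurableSet {ω | ⌊(n:ℝ) * p1⌋₊ < C S1 n ω} :=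
      (hCm S1 hS1 n) (Set.to_countable _).measurableSet
    have m2 : MeasurableSet {ω | C S2 n ω ≤ ⌊(n:ℝ) * q1⌋₊ - 1} :=
      (hCm S2 hS2 n) ((Set.to_countable {m : ℕ | m ≤ ⌊(n:ℝ) * q1⌋₊ - 1}).measurableSet)
    have m3 : MeasurableSet {ω | ⌊(n:ℝ) * p2⌋₊ < C S3 n ω} :=
      (hCm S3 hS3 n) (Set.to_countable _).measurableSet
    have m4 : MeasurableSet {ω | C S4 n ω ≤ ⌊(n:ℝ) * q2⌋₊ - 1} :=
      (hCm S4 hS4 n) ((Set.to_countable {m : ℕ | m ≤ ⌊(n:ℝ) * q2⌋₊ - 1}).measurableSet)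
    have m5 : MeasurableSet {ω | 0 < C S5 n ω} :=
      (hCm S5 hS5 n) (Set.to_countable _).measurableSet
    have m6 : MeasurableSet {ω : Ω | 1 ≤ n} := by
      by_cases h : 1 ≤ n
      · simp [h]
      · simp [h]
    exact (m1.inter (m2.inter (m3.inter (m4.inter (m5.inter m6)))) :
      MeasurableSet ({ω | ⌊(n:ℝ) * p1⌋₊ < C S1 n ω} ∩ ({ω | C S2 n ω ≤ ⌊(n:ℝ) * q1⌋₊ - 1}
        ∩ ({ω | ⌊(n:ℝ) * p2⌋₊ < C S3 n ω} ∩ ({ω | C S4 n ω ≤ ⌊(n:ℝ) * q2⌋₊ - 1}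
        ∩ ({ω | 0 < C S5 n ω} ∩ {ω : Ω | 1 ≤ n}))))))
  -- the a.e. eventually statement
  have hae : ∀ᵐ ω ∂μ, ∀ᶠ n in atTop, ω ∈ F n := by
    filter_upwards [hlln S1 hS1, hlln S2 hS2, hlln S3 hS3, hlln S4 hS4, hlln S5 hS5]
      with ω H1 H2 H3 H4 H5
    rw [hpre1] at H1; rw [hpre2] at H2; rw [hpre3] at H3; rw [hpre4] at H4; rw [hpre5] at H5
    obtain ⟨N, hN⟩ := exists_nat_ge (4 / ε)
    have E1 : ∀ᶠ n : ℕ in atTop, ⌊(n:ℝ) * p1⌋₊ < C S1 n ω := by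
      filter_upwards [H1.eventually (eventually_gt_nhds (show p1 + ε / 2 < p1 + ε by linarith)),
        eventually_ge_atTop 1] with n h hn
      have hn0 : (0:ℝ) < n := by exact_mod_cast hn
      rw [lt_div_iff₀ hn0] at h
      have hfl : (⌊(n:ℝ) * p1⌋₊ : ℝ) ≤ (n:ℝ) * p1 := Nat.floor_le (by positivity)
      have : (⌊(n:ℝ) * p1⌋₊ : ℝ) < (C S1 n ω : ℝ) := by nlinarith
      exact_mod_cast this
    have E3 : ∀ᶠ n : ℕ in atTop, ⌊(n:ℝ) * p2⌋₊ < C S3 n ω := by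
      filter_upwards [H3.eventually (eventually_gt_nhds (show p2 + ε / 2 < p2 + ε by linarith)),
        eventually_ge_atTop 1] with n h hn
      have hn0 : (0:ℝ) < n := by exact_mod_cast hn
      rw [lt_div_iff₀ hn0] at h
      have hfl : (⌊(n:ℝ) * p2⌋₊ : ℝ) ≤ (n:ℝ) * p2 := Nat.floor_le (by positivity)
      have : (⌊(n:ℝ) * p2⌋₊ : ℝ) < (C S3 n ω : ℝ) := by nlinarith
      exact_mod_cast this
    have E2 : ∀ᶠ n : ℕ in atTop, C S2 n ω ≤ ⌊(n:ℝ) * q1⌋₊ - 1 := by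
      filter_upwards [H2.eventually (eventually_lt_nhds (show q1 - ε < q1 - ε / 2 by linarith)),
        eventually_ge_atTop (max N 1)] with n h hn
      have hn1 : 1 ≤ n := le_trans (le_max_right _ _) hn
      have hnN : (N:ℝ) ≤ n := by exact_mod_cast le_trans (le_max_left _ _) hn
      have hn0 : (0:ℝ) < n := by exact_mod_cast hn1
      rw [div_lt_iff₀ hn0] at h
      have hεn : 4 ≤ (n:ℝ) * ε := by
        have : 4 / ε ≤ (n:ℝ) := le_trans hN hnN
        rw [div_le_iff₀ hε] at this
        linarith [mul_comm (n:ℝ) ε]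
      have hkey : (C S2 n ω : ℝ) + 2 ≤ (n:ℝ) * q1 := by nlinarith
      have h2' : C S2 n ω + 2 ≤ ⌊(n:ℝ) * q1⌋₊ := Nat.le_floor (by push_cast; linarith)
      omega
    have E4 : ∀ᶠ n : ℕ in atTop, C S4 n ω ≤ ⌊(n:ℝ) * q2⌋₊ - 1 := by
      filter_upwards [H4.eventually (eventually_lt_nhds (show q2 - ε < q2 - ε / 2 by linarith)),
        eventually_ge_atTop (max N 1)] with n h hn
      have hn1 : 1 ≤ n := le_trans (le_max_right _ _) hn
      have hnN : (N:ℝ) ≤ n := by exact_mod_cast le_trans (le_max_left _ _) hn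
      have hn0 : (0:ℝ) < n := by exact_mod_cast hn1
      rw [div_lt_iff₀ hn0] at h
      have hεn : 4 ≤ (n:ℝ) * ε := by
        have : 4 / ε ≤ (n:ℝ) := le_trans hN hnN
        rw [div_le_iff₀ hε] at this
        linarith [mul_comm (n:ℝ) ε]
      have hkey : (C S4 n ω : ℝ) + 2 ≤ (n:ℝ) * q2 := by nlinarith
      have h2' : C S4 n ω + 2 ≤ ⌊(n:ℝ) * q2⌋₊ := Nat.le_floor (by push_cast; linarith)
      omega
    have E5 : ∀ᶠ n : ℕ in atTop, 0 < C S5 n ω := by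
      filter_upwards [H5.eventually (eventually_gt_nhds (show δ / 2 < δ by linarith)),
        eventually_ge_atTop 1] with n h hn
      by_contra h0
      push_neg at h0
      have hC0 : C S5 n ω = 0 := Nat.le_zero.1 h0
      have hrfl : ((Finset.filter (fun i => (Xs i ω, Ys i ω) ∈ S5) (Finset.range n)).card : ℝ)
          = ((C S5 n ω : ℕ) : ℝ) := rfl
      rw [hrfl, hC0] at h
      norm_num at h
      linarith
    filter_upwards [E1, E2, E3, E4, E5, eventually_ge_atTop 1] with n e1 e2 e3 e4 e5 e6
    exact ⟨e1, e2, e3, e4, e5, e6⟩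
  -- inclusion of the good event in the target event
  have hsub : ∀ n, F n ⊆ {ω | 0 <
      ((Finset.range n).filter (fun i =>
        Xs i ω ∈ Set.Icc (orderStat n (fun j => Xs j ω) ⌊(n:ℝ) * p1⌋₊)
                         (orderStat n (fun j => Xs j ω) (⌊(n:ℝ) * q1⌋₊ - 1)) ∧
        Ys i ω ∈ Set.Icc (orderStat n (fun j => Ys j ω) ⌊(n:ℝ) * p2⌋₊)
                         (orderStat n (fun j => Ys j ω) (⌊(n:ℝ) * q2⌋₊ - 1)))).card} := by
    intro n ω hω
    obtain ⟨hg1, hg2, hg3, hg4, hg5, hn1⟩ := hω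
    have hn0 : (0:ℝ) < n := by exact_mod_cast hn1
    have hk1 : ⌊(n:ℝ) * p1⌋₊ < n := by
      rw [Nat.floor_lt (by positivity)]
      nlinarith
    have hk3 : ⌊(n:ℝ) * p2⌋₊ < n := by
      rw [Nat.floor_lt (by positivity)]
      nlinarith
    have hk2 : ⌊(n:ℝ) * q1⌋₊ - 1 < n := by
      have : ⌊(n:ℝ) * q1⌋₊ < n := by
        rw [Nat.floor_lt (mul_nonneg hn0.le (by linarith))]; nlinarith
      omega
    have hk4 : ⌊(n:ℝ) * q2⌋₊ - 1 < n := by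
      have : ⌊(n:ℝ) * q2⌋₊ < n := by
        rw [Nat.floor_lt (mul_nonneg hn0.le (by linarith))]; nlinarith
      omega
    rw [Finset.card_pos] at hg5
    obtain ⟨i, hi⟩ := hg5
    rw [Finset.mem_filter] at hi
    obtain ⟨hirange, hiS5⟩ := hi
    obtain ⟨⟨hxa, hxb⟩, hya, hyb⟩ := (hS5mem _).1 hiS5
    -- order statistics bounds
    have ho1 : orderStat n (fun j => Xs j ω) ⌊(n:ℝ) * p1⌋₊ ≤ c1 := by
      rw [orderStat_le_iff hk1]
      have heq : ((Finset.range n).filter fun j => Xs j ω ≤ c1)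
          = ((Finset.range n).filter fun j => (Xs j ω, Ys j ω) ∈ S1) :=
        Finset.filter_congr (fun j _ => (hS1mem (Xs j ω, Ys j ω)).symm)
      rw [heq]
      exact hg1
    have ho3 : orderStat n (fun j => Ys j ω) ⌊(n:ℝ) * p2⌋₊ ≤ d1 := by
      rw [orderStat_le_iff hk3]
      have heq : ((Finset.range n).filter fun j => Ys j ω ≤ d1)
          = ((Finset.range n).filter fun j => (Xs j ω, Ys j ω) ∈ S3) :=
        Finset.filter_congr (fun j _ => (hS3mem (Xs j ω, Ys j ω)).symm)
      rw [heq]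
      exact hg3
    have ho2 : c2 ≤ orderStat n (fun j => Xs j ω) (⌊(n:ℝ) * q1⌋₊ - 1) := by
      rw [le_orderStat_iff hk2]
      have hsub' : ((Finset.range n).filter fun j => Xs j ω < c2)
          ⊆ ((Finset.range n).filter fun j => (Xs j ω, Ys j ω) ∈ S2) :=
        Finset.monotone_filter_right _ (fun j _ (h : Xs j ω < c2) => (hS2mem _).2 (le_of_lt h))
      exact le_trans (Finset.card_le_card hsub') hg2
    have ho4 : d2 ≤ orderStat n (fun j => Ys j ω) (⌊(n:ℝ) * q2⌋₊ - 1) := by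
      rw [le_orderStat_iff hk4]
      have hsub' : ((Finset.range n).filter fun j => Ys j ω < d2)
          ⊆ ((Finset.range n).filter fun j => (Xs j ω, Ys j ω) ∈ S4) :=
        Finset.monotone_filter_right _ (fun j _ (h : Ys j ω < d2) => (hS4mem _).2 (le_of_lt h))
      exact le_trans (Finset.card_le_card hsub') hg4
    refine Finset.card_pos.2 ⟨i, Finset.mem_filter.2 ⟨hirange, ?_, ?_⟩⟩
    · exact ⟨le_trans ho1 hxa, le_trans hxb ho2⟩
    · exact ⟨le_trans ho3 hya, le_trans hyb ho4⟩
  exact tendsto_measure_of_ae_eventually μ F _ hFmeas hsub hae
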